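/- Let N be a nilpotent group of nilpotency class at most n that is generated by k elements, where k ≥ 2. Then N admits a subnormal series N = M_0 ⊳ M_1 ⊳ ... ⊳ M_s = {1} (each M_i normal in M_{i−1}) with all quotients M_{i−1}/M_i cyclic, of length s = (k^{n+1} − k)/(k − 1) = k + k² + ... + k^n. In particular, every finitely generated nilpotent group is polycyclic. -/

import Mathlib

/-- `c` is a subnormal series `G = c 0 ⊳ c 1 ⊳ … ⊳ c n = {1}` (each term normal in the
previous one) with all quotients cyclic. -/
def IsCyclicSeries {G : Type*} [Group G] (n : ℕ) (c : Fin (n + 1) → Subgroup G) : Prop :=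
  c 0 = ⊤ ∧ c (Fin.last n) = ⊥ ∧
    ∀ i : Fin n, c i.succ ≤ c i.castSucc ∧
      ∃ _h : ((c i.succ).subgroupOf (c i.castSucc)).Normal,
        IsCyclic (↥(c i.castSucc) ⧸ (c i.succ).subgroupOf (c i.castSucc))

/-!
Write `γᵢ` for the lower central series. Since `γᵢ₊₁ = ⁅γᵢ, N⁆`, every subgroup between `γᵢ₊₁` and
`γᵢ` is normal in `N`, and modulo `γᵢ₊₁` the group `γᵢ` is generated by the at most `kⁱ⁺¹`
left-normed commutators `⁅⋯⁅t₀, t₁⁆, ⋯, tᵢ⁆` of generators. Adjoining these commutators to `γᵢ₊₁`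
one at a time gives a chain from `γᵢ` down to `γᵢ₊₁` of at most `kⁱ⁺¹` cyclic steps.
Concatenating these chains for `i < n` and padding with trivial steps gives a cyclic series of
length `k + k² + ⋯ + kⁿ`.
-/

section

open Subgroup
open scoped commutatorElement

variable {G : Type*} [Group G]

def IsCyclicStep (A B : Subgroup G) : Prop :=
  B ≤ A ∧ ∃ _h : (B.subgroupOf A).Normal, IsCyclic (A ⧸ B.subgroupOf A)

theorem isCyclicStep_self (A : Subgroup G) : IsCyclicStep A A := by
  refine ⟨le_rfl, ?_⟩
  rw [subgroupOf_self]
  exact ⟨inferInstance, @isCyclic_of_subsingleton _ _ QuotientGroup.subsingleton_quotient_top⟩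

theorem isCyclicStep_of_eq_zpowers_sup {A B : Subgroup G} [B.Normal] {g : G}
    (hA : A = zpowers g ⊔ B) : IsCyclicStep A B := by
  have hg : g ∈ A := hA ▸ mem_sup_left (mem_zpowers g)
  refine ⟨hA ▸ le_sup_right, inferInstance, ⟨QuotientGroup.mk ⟨g, hg⟩, ?_⟩⟩
  intro q
  induction q using QuotientGroup.induction_on with | H x => ?_
  obtain ⟨x, hx⟩ := x
  obtain ⟨_, ⟨m, rfl⟩, b, hb, rfl⟩ := mem_sup_of_normal_right.mp (hA ▸ hx)
  refine ⟨m, ?_⟩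
  dsimp only
  rw [← QuotientGroup.mk_zpow, QuotientGroup.eq, mem_subgroupOf]
  simpa using hb

inductive CyclicChain : Subgroup G → Subgroup G → ℕ → Prop
  | refl (A : Subgroup G) : CyclicChain A A 0
  | step {A B C : Subgroup G} {m : ℕ} : IsCyclicStep A B → CyclicChain B C m →
      CyclicChain A C (m + 1)

namespace CyclicChain

theorem trans {A B C : Subgroup G} {m m' : ℕ} (h : CyclicChain A B m) (h' : CyclicChain B C m') :
    CyclicChain A C (m' + m) := by
  induction h with
  | refl => exact h'
  | step hAB _ ih => exact .step hAB (ih h')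

theorem self (A : Subgroup G) : ∀ m, CyclicChain A A m
  | 0 => .refl A
  | m + 1 => .step (isCyclicStep_self A) (self A m)

theorem of_le {A B : Subgroup G} {m m' : ℕ} (h : CyclicChain A B m) (hm : m ≤ m') :
    CyclicChain A B m' := by
  obtain ⟨d, rfl⟩ := Nat.exists_eq_add_of_le hm
  simpa [add_comm] using h.trans (self B d)

theorem exists_fin {A B : Subgroup G} {m : ℕ} (h : CyclicChain A B m) :
    ∃ c : Fin (m + 1) → Subgroup G, c 0 = A ∧ c (Fin.last m) = B ∧
      ∀ i : Fin m, IsCyclicStep (c i.castSucc) (c i.succ) := by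
  induction h with
  | refl A => exact ⟨fun _ => A, rfl, rfl, Fin.elim0⟩
  | step hAB _ ih =>
    obtain ⟨c, hc0, hcl, hc⟩ := ih
    refine ⟨Fin.cons _ c, rfl, by simpa [← Fin.succ_last] using hcl, Fin.cases ?_ fun i => ?_⟩
    · simpa [hc0] using hAB
    · simpa [← Fin.succ_castSucc] using hc i

end CyclicChain

theorem cyclicChain_closure_sup (B : Subgroup G) (S : Finset G)
    (hnormal : ∀ K : Subgroup G, B ≤ K → K ≤ Subgroup.closure S ⊔ B → K.Normal) :
    CyclicChain (Subgroup.closure S ⊔ B) B S.card := by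
  classical
  induction S using Finset.induction_on with
  | empty => simpa using CyclicChain.refl B
  | insert a S ha ih =>
    have hsup : Subgroup.closure ↑(insert a S) ⊔ B = zpowers a ⊔ (Subgroup.closure S ⊔ B) := by
      rw [Finset.coe_insert, Set.insert_eq, Subgroup.closure_union, zpowers_eq_closure, sup_assoc]
    rw [hsup] at hnormal ⊢
    rw [Finset.card_insert_of_notMem ha]
    have := hnormal _ le_sup_right le_sup_right
    exact .step (isCyclicStep_of_eq_zpowers_sup rfl)
      (ih fun K h1 h2 => hnormal K h1 (h2.trans le_sup_right))

theorem normal_of_commutator_le {K : Subgroup G} (h : ⁅K, ⊤⁆ ≤ K) : K.Normal where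
  conj_mem g hg x := by
    have hxg : ⁅x, g⁆ ∈ K := by
      rw [← commutatorElement_inv]
      exact K.inv_mem (h (commutator_mem_commutator hg (mem_top x)))
    rw [show x * g * x⁻¹ = ⁅x, g⁆ * g by group]
    exact K.mul_mem hxg hg

theorem normal_of_lowerCentralSeries_le {i : ℕ} {K : Subgroup G}
    (h1 : (⊤ : Subgroup G).lowerCentralSeries (i + 1) ≤ K)
    (h2 : K ≤ (⊤ : Subgroup G).lowerCentralSeries i) : K.Normal :=
  normal_of_commutator_le ((commutator_mono h2 le_rfl).trans h1)

theorem commutator_closure_le {K : Subgroup G} [K.Normal] {S T : Set G}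
    (h : ∀ s ∈ S, ∀ t ∈ T, ⁅s, t⁆ ∈ K) : ⁅Subgroup.closure S, Subgroup.closure T⁆ ≤ K := by
  -- in `G ⧸ K` the images of `S` and `T` commute, hence so do the subgroups they generate
  rw [← QuotientGroup.ker_mk' K, ← Subgroup.map_eq_bot_iff, map_commutator,
    MonoidHom.map_closure, MonoidHom.map_closure, commutator_eq_bot_iff_le_centralizer, closure_le,
    centralizer_closure]
  rintro _ ⟨s, hs, rfl⟩
  rw [SetLike.mem_coe, mem_centralizer_iff_commutator_eq_one]
  rintro _ ⟨t, ht, rfl⟩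
  rw [← commutatorElement_inv, ← map_commutatorElement, inv_eq_one, ← MonoidHom.mem_ker,
    QuotientGroup.ker_mk']
  exact h s hs t ht

section IteratedCommutators

variable [DecidableEq G]

def iteratedCommutators (T : Finset G) : ℕ → Finset G
  | 0 => T
  | i + 1 => Finset.image₂ (fun c t => ⁅c, t⁆) (iteratedCommutators T i) T

variable (T : Finset G)

theorem card_iteratedCommutators_le (i : ℕ) :
    (iteratedCommutators T i).card ≤ T.card ^ (i + 1) := by
  induction i with
  | zero => simp [iteratedCommutators]
  | succ i ih =>
    calc (iteratedCommutators T (i + 1)).card ≤ (iteratedCommutators T i).card * T.card :=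
          Finset.card_image₂_le _ _ _
      _ ≤ T.card ^ (i + 1) * T.card := Nat.mul_le_mul_right _ ih
      _ = T.card ^ (i + 2) := (pow_succ _ _).symm

theorem iteratedCommutators_subset_lowerCentralSeries (i : ℕ) :
    (iteratedCommutators T i : Set G) ⊆ (⊤ : Subgroup G).lowerCentralSeries i := by
  induction i with
  | zero => simp
  | succ i ih =>
    intro x hx
    simp only [iteratedCommutators, Finset.coe_image₂, Set.mem_image2] at hx
    obtain ⟨c, hc, t, -, rfl⟩ := hx
    exact commutator_mem_commutator (ih hc) (mem_top t)

theorem closure_iteratedCommutators_sup {T : Finset G} (hT : Subgroup.closure (T : Set G) = ⊤)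
    (i : ℕ) :
    Subgroup.closure (iteratedCommutators T i : Set G) ⊔
        (⊤ : Subgroup G).lowerCentralSeries (i + 1) =
      (⊤ : Subgroup G).lowerCentralSeries i := by
  induction i with
  | zero => simp [iteratedCommutators, hT]
  | succ i ih =>
    set K := Subgroup.closure (iteratedCommutators T (i + 1) : Set G) ⊔
      (⊤ : Subgroup G).lowerCentralSeries (i + 2)
    have hK : K ≤ (⊤ : Subgroup G).lowerCentralSeries (i + 1) :=
      sup_le ((Subgroup.closure_le _).2 (iteratedCommutators_subset_lowerCentralSeries T (i + 1)))
        (Subgroup.lowerCentralSeries_antitone _ (Nat.le_succ _))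
    have := normal_of_lowerCentralSeries_le le_sup_right hK
    refine le_antisymm hK ?_
    calc (⊤ : Subgroup G).lowerCentralSeries (i + 1)
        = ⁅Subgroup.closure ((iteratedCommutators T i : Set G) ∪
            ((⊤ : Subgroup G).lowerCentralSeries (i + 1) : Set G)),
            Subgroup.closure T⁆ := by
          rw [Subgroup.closure_union, Subgroup.closure_eq, ih, hT]; rfl
      _ ≤ K := by
        refine commutator_closure_le ?_
        rintro s (hs | hs) t ht
        · exact le_sup_left (a := Subgroup.closure _)
            (Subgroup.subset_closure (Finset.mem_image₂_of_mem hs ht))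
        · exact le_sup_right (a := Subgroup.closure _) (commutator_mem_commutator hs (mem_top t))

end IteratedCommutators

theorem cyclicChain_top_lowerCentralSeries {T : Finset G}
    (hT : Subgroup.closure (T : Set G) = ⊤) (i : ℕ) :
    CyclicChain ⊤ ((⊤ : Subgroup G).lowerCentralSeries i)
      (∑ j ∈ Finset.range i, T.card ^ (j + 1)) := by
  classical
  induction i with
  | zero => exact .refl ⊤
  | succ i ih =>
    have hsup := closure_iteratedCommutators_sup hT i
    have hstep := cyclicChain_closure_sup _ (iteratedCommutators T i)
      fun K h1 h2 => normal_of_lowerCentralSeries_le h1 (h2.trans hsup.le)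
    rw [hsup] at hstep
    rw [Finset.sum_range_succ, Nat.add_comm _ (T.card ^ (i + 1))]
    exact ih.trans (hstep.of_le (card_iteratedCommutators_le T i))

end

theorem Nat.sum_range_pow_succ_eq_div {k : ℕ} (hk : 2 ≤ k) (n : ℕ) :
    ∑ j ∈ Finset.range n, k ^ (j + 1) = (k ^ (n + 1) - k) / (k - 1) := by
  refine (Nat.div_eq_of_eq_mul_left (by omega) ?_).symm
  simp_rw [pow_succ', ← Finset.mul_sum]
  rw [mul_assoc, geom_sum_mul_of_one_le (by omega), Nat.mul_sub_one]

/-- if `N` is a nilpotent group of nilpotency class at most `n` generated by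
`k ≥ 2` elements, then `N` admits a subnormal series with cyclic quotients of length
`s = (k^(n+1) − k)/(k − 1) = k + k² + … + kⁿ`. In particular every finitely generated
nilpotent group is polycyclic. -/
theorem cyclic_series_of_nilpotent {N : Type*} [Group N] (n : ℕ)
    (hnil : (⊤ : Subgroup N).lowerCentralSeries n = ⊥) (k : ℕ) (hk : 2 ≤ k)
    (T : Finset N) (hT : Subgroup.closure (T : Set N) = ⊤) (hTcard : T.card ≤ k) :
    ∃ c : Fin ((k ^ (n + 1) - k) / (k - 1) + 1) → Subgroup N,
      IsCyclicSeries ((k ^ (n + 1) - k) / (k - 1)) c := by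
  have hchain := (cyclicChain_top_lowerCentralSeries hT n).of_le
    (Finset.sum_le_sum fun j _ => Nat.pow_le_pow_left hTcard (j + 1))
  rw [hnil, Nat.sum_range_pow_succ_eq_div hk] at hchain
  exact hchain.exists_fin
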